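/- Let 𝒜 be an abelian category, 𝒞 ⊆ 𝒜 full and additive, C• a bounded-above complex of objects of 𝒞, and X• an arbitrary complex. Then the canonical map Hom_{K(𝒜)}(C•, X•) → Hom_{D_𝒞(𝒜)}(C•, X•) is an isomorphism of abelian groups. -/

import Mathlib

/-
A chain map from a bounded-above complex `K` to a complex `L` with every `Hom_𝒜(K^i, L)` acyclic
is null-homotopic: the homotopy is built downwards from the top degree of `K`, each new component
being a lift of a cocycle of `Hom_𝒜(K^{j+1}, L)` along `d : L^j ⟶ L^{j+1}`. Hence `C•` is left
orthogonal to `K_{𝒞-ac}(𝒜)`, a triangulated subcategory whose associated class of morphisms is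
exactly that of the `𝒞`-quasi-isomorphisms. By the calculus of fractions, localizing at this class
is bijective on morphisms out of a left-orthogonal object.
-/

open CategoryTheory Limits

universe v u

variable {A : Type u} [Category.{v} A] [Abelian A]

/-- A complex `X` is `𝒞`-acyclic if `Hom_𝒜(C, X)` is an acyclic complex of abelian
groups for every `C ∈ 𝒞`. -/
def CAcyclic (𝒞 : Set A) (X : CochainComplex A ℤ) : Prop :=
  ∀ C ∈ 𝒞, ∀ i : ℤ,
    (((preadditiveCoyoneda.obj (Opposite.op C)).mapHomologicalComplex
      (ComplexShape.up ℤ)).obj X).ExactAt i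

/-- A chain map `f` is a `𝒞`-quasi-isomorphism if `Hom_𝒜(C, f)` is a quasi-isomorphism
for every `C ∈ 𝒞`. -/
def CQuasiIso (𝒞 : Set A) {X Y : CochainComplex A ℤ} (f : X ⟶ Y) : Prop :=
  ∀ C ∈ 𝒞, QuasiIso (((preadditiveCoyoneda.obj (Opposite.op C)).mapHomologicalComplex
      (ComplexShape.up ℤ)).map f)

/-- A cochain complex is bounded above. -/
def BoundedAbove (X : CochainComplex A ℤ) : Prop :=
  ∃ n : ℤ, ∀ i : ℤ, n < i → IsZero (X.X i)

/-- The class of morphisms of the homotopy category `K(𝒜)` represented by a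
`𝒞`-quasi-isomorphism. Localizing at this class gives the `𝒞`-derived category
`D_𝒞(𝒜) = K(𝒜)/K_{𝒞-ac}(𝒜)`. -/
def Wc (𝒞 : Set A) : MorphismProperty (HomotopyCategory A (ComplexShape.up ℤ)) :=
  fun X Y f => ∃ f₀ : X.as ⟶ Y.as, CQuasiIso 𝒞 f₀ ∧
    f = (HomotopyCategory.quotient A (ComplexShape.up ℤ)).map f₀

namespace CochainComplex

open HomologicalComplex

lemma exists_comp_d_eq_of_exactAt_preadditiveCoyoneda {P : A} {L : CochainComplex A ℤ} {j : ℤ}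
    (hL : (((preadditiveCoyoneda.obj (Opposite.op P)).mapHomologicalComplex
      (ComplexShape.up ℤ)).obj L).ExactAt (j + 1))
    (g : P ⟶ L.X (j + 1)) (hg : g ≫ L.d (j + 1) (j + 1 + 1) = 0) :
    ∃ s : P ⟶ L.X j, s ≫ L.d j (j + 1) = g := by
  rw [exactAt_iff' _ j (j + 1) (j + 1 + 1) (by simp) (by simp), ShortComplex.ab_exact_iff] at hL
  exact hL g hg

variable {K L : CochainComplex A ℤ} (f : K ⟶ L)

/-- Two consecutive components of a homotopy from `f` to `0`, subject to the homotopy relation in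
degree `j + 1`. Indexing them by their target degree avoids any transport along `j + 1 - 1 = j`. -/
structure PartialNullHomotopy (j : ℤ) where
  hom : K.X (j + 1) ⟶ L.X j
  homSucc : K.X (j + 1 + 1) ⟶ L.X (j + 1)
  comm : f.f (j + 1) = K.d (j + 1) (j + 1 + 1) ≫ homSucc + hom ≫ L.d j (j + 1)

namespace PartialNullHomotopy

variable {f}

lemma comp_d_sub_eq_zero {j : ℤ} (s : PartialNullHomotopy f (j + 1)) :
    (f.f (j + 1) - K.d (j + 1) (j + 1 + 1) ≫ s.hom) ≫ L.d (j + 1) (j + 1 + 1) = 0 := by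
  have hs : s.hom ≫ L.d (j + 1) (j + 1 + 1) =
      f.f (j + 1 + 1) - K.d (j + 1 + 1) (j + 1 + 1 + 1) ≫ s.homSucc :=
    eq_sub_of_add_eq' s.comm.symm
  rw [Preadditive.sub_comp, Category.assoc, hs, Preadditive.comp_sub, K.d_comp_d_assoc,
    zero_comp, sub_zero, f.comm, sub_self]

noncomputable def descend {j : ℤ}
    (hL : (((preadditiveCoyoneda.obj (Opposite.op (K.X (j + 1)))).mapHomologicalComplex
      (ComplexShape.up ℤ)).obj L).ExactAt (j + 1))
    (s : PartialNullHomotopy f (j + 1)) : PartialNullHomotopy f j where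
  hom := (exists_comp_d_eq_of_exactAt_preadditiveCoyoneda hL _ s.comp_d_sub_eq_zero).choose
  homSucc := s.hom
  comm := by
    rw [(exists_comp_d_eq_of_exactAt_preadditiveCoyoneda hL _ s.comp_d_sub_eq_zero).choose_spec]
    abel

end PartialNullHomotopy

section

variable (n : ℤ) (hK : ∀ i, n < i → IsZero (K.X i))
  (hL : ∀ i j, (((preadditiveCoyoneda.obj (Opposite.op (K.X i))).mapHomologicalComplex
    (ComplexShape.up ℤ)).obj L).ExactAt j)

noncomputable def partialNullHomotopy (j : ℤ) : PartialNullHomotopy f j :=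
  if h : n ≤ j then ⟨0, 0, (hK (j + 1) (by omega)).eq_of_src _ _⟩
  else (partialNullHomotopy (j + 1)).descend (hL _ _)
termination_by (n - j).toNat

lemma partialNullHomotopy_homSucc (j : ℤ) :
    (partialNullHomotopy f n hK hL j).homSucc = (partialNullHomotopy f n hK hL (j + 1)).hom := by
  by_cases h : n ≤ j
  · rw [partialNullHomotopy, dif_pos h, partialNullHomotopy, dif_pos (by omega)]
  · rw [partialNullHomotopy, dif_neg h]
    rfl

lemma eq_nullHomotopicMap'_partialNullHomotopy :
    f = Homotopy.nullHomotopicMap' (fun i j (hij : (ComplexShape.up ℤ).Rel j i) =>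
      (K.XIsoOfEq hij).inv ≫ (partialNullHomotopy f n hK hL j).hom) := by
  ext i
  obtain ⟨j, rfl⟩ : ∃ j, i = j + 1 := ⟨i - 1, by omega⟩
  rw [Homotopy.nullHomotopicMap'_f (c := ComplexShape.up ℤ) (k₀ := j + 1 + 1) rfl rfl]
  simp only [XIsoOfEq_rfl, Iso.refl_inv, Category.id_comp, ← partialNullHomotopy_homSucc]
  exact (partialNullHomotopy f n hK hL j).comm

end

lemma nonempty_homotopy_zero_of_boundedAbove (hK : BoundedAbove K)
    (hL : ∀ i j, (((preadditiveCoyoneda.obj (Opposite.op (K.X i))).mapHomologicalComplex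
      (ComplexShape.up ℤ)).obj L).ExactAt j) :
    Nonempty (Homotopy f 0) :=
  let ⟨n, hn⟩ := hK
  ⟨(Homotopy.ofEq (eq_nullHomotopicMap'_partialNullHomotopy f n hn hL)).trans
    (Homotopy.nullHomotopy' _)⟩

end CochainComplex

namespace CategoryTheory.ObjectProperty

open Pretriangulated ZeroObject

variable {C : Type*} [Category C] [HasZeroObject C] [HasShift C ℤ] [Preadditive C]
  [∀ n : ℤ, (shiftFunctor C n).Additive] [Pretriangulated C]
  {ι : Type*} (P : ι → ObjectProperty C) [∀ i, (P i).IsClosedUnderIsomorphisms]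

instance isTriangulated_iInf [∀ i, (P i).IsTriangulated] : (⨅ i, P i).IsTriangulated where
  exists_zero := ⟨0, isZero_zero C, by
    simpa only [iInf_apply, iInf_Prop_eq] using fun i => (P i).prop_of_isZero (isZero_zero C)⟩
  isStableUnderShiftBy a := ⟨fun X hX => by
    simp only [iInf_apply, iInf_Prop_eq] at hX
    simpa only [prop_shift_iff, iInf_apply, iInf_Prop_eq] using fun i => (P i).le_shift a X (hX i)⟩
  toIsTriangulatedClosed₂ := .mk' fun T hT h₁ h₃ => by
    simp only [iInf_apply, iInf_Prop_eq] at h₁ h₃ ⊢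
    exact fun i => (P i).ext_of_isTriangulatedClosed₂ T hT (h₁ i) (h₃ i)

lemma trW_iInf_iff [∀ i, (P i).IsTriangulated] {X Y : C} (f : X ⟶ Y) :
    (⨅ i, P i).trW f ↔ ∀ i, (P i).trW f := by
  obtain ⟨Z, g, h, hT⟩ := distinguished_cocone_triangle f
  refine ((⨅ i, P i).trW_iff_of_distinguished _ hT).trans ?_
  rw [iInf_apply, iInf_Prop_eq]
  exact forall_congr' fun i => ((P i).trW_iff_of_distinguished _ hT).symm

end CategoryTheory.ObjectProperty

namespace HomotopyCategory

open ObjectProperty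

variable (𝒞 : Set A)

/-- The thick subcategory `K_{𝒞-ac}(𝒜)` of `K(𝒜)`. -/
def subcategoryCAcyclic : ObjectProperty (HomotopyCategory A (ComplexShape.up ℤ)) :=
  ⨅ C : 𝒞, (subcategoryAcyclic AddCommGrpCat.{v}).inverseImage
    ((preadditiveCoyoneda.obj (Opposite.op C.1)).mapHomotopyCategory (ComplexShape.up ℤ))

instance : (subcategoryCAcyclic 𝒞).IsTriangulated := by
  dsimp only [subcategoryCAcyclic]
  infer_instance

lemma quotient_obj_mem_subcategoryCAcyclic_iff (X : CochainComplex A ℤ) :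
    subcategoryCAcyclic 𝒞 ((quotient _ _).obj X) ↔ CAcyclic 𝒞 X := by
  simp only [subcategoryCAcyclic, iInf_apply, iInf_Prop_eq, prop_inverseImage_iff, Subtype.forall]
  exact forall₂_congr fun C _ => quotient_obj_mem_subcategoryAcyclic_iff_exactAt _

lemma quotient_map_mem_trW_subcategoryCAcyclic_iff {X Y : CochainComplex A ℤ} (f : X ⟶ Y) :
    (subcategoryCAcyclic 𝒞).trW ((quotient _ _).map f) ↔ CQuasiIso 𝒞 f := by
  rw [subcategoryCAcyclic, trW_iInf_iff, Subtype.forall]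
  refine forall₂_congr fun C _ => ?_
  rw [inverseImage_trW_iff, ← quasiIso_eq_trW_subcategoryAcyclic]
  exact quotient_map_mem_quasiIso_iff _

lemma Wc_eq_trW_subcategoryCAcyclic : Wc 𝒞 = (subcategoryCAcyclic 𝒞).trW := by
  ext X Y f
  constructor
  · rintro ⟨f₀, hf₀, rfl⟩
    exact (quotient_map_mem_trW_subcategoryCAcyclic_iff 𝒞 f₀).2 hf₀
  · intro hf
    obtain ⟨f₀, rfl⟩ := (quotient A (ComplexShape.up ℤ)).map_surjective f
    exact ⟨f₀, (quotient_map_mem_trW_subcategoryCAcyclic_iff 𝒞 f₀).1 hf, rfl⟩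

variable {𝒞} in
lemma leftOrthogonal_subcategoryCAcyclic_quotient_obj {K : CochainComplex A ℤ}
    (hK : ∀ i, K.X i ∈ 𝒞) (hb : BoundedAbove K) :
    (subcategoryCAcyclic 𝒞).leftOrthogonal ((quotient _ _).obj K) := by
  intro Z f hZ
  obtain ⟨Z, rfl⟩ := quotient_obj_surjective Z
  obtain ⟨f, rfl⟩ := (quotient _ _).map_surjective f
  rw [quotient_obj_mem_subcategoryCAcyclic_iff] at hZ
  obtain ⟨h⟩ := CochainComplex.nonempty_homotopy_zero_of_boundedAbove f hb
    fun i => hZ (K.X i) (hK i)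
  rw [eq_of_homotopy f 0 h, Functor.map_zero]

end HomotopyCategory

theorem stmt8 (𝒞 : Set A) (Cc X : CochainComplex A ℤ)
    (hC : ∀ i, Cc.X i ∈ 𝒞) (hbdd : BoundedAbove Cc) :
    Function.Bijective
      (fun f : ((HomotopyCategory.quotient A (ComplexShape.up ℤ)).obj Cc ⟶
          (HomotopyCategory.quotient A (ComplexShape.up ℤ)).obj X) =>
        (Wc 𝒞).Q.map f) := by
  rw [HomotopyCategory.Wc_eq_trW_subcategoryCAcyclic]
  exact (HomotopyCategory.leftOrthogonal_subcategoryCAcyclic_quotient_obj hC hbdd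
    ).map_bijective_of_isTriangulated _ _
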